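/- arXiv:2403.11555 — 2 statements merged into one kernel-verified Lean document; each statement's English description precedes it below -/
import Mathlib

section
/- Let k ≥ 4 and let G be an odd k⁺-critical graph. For every edge v₀v₁ of G with d(v₀) ≡ d(v₁) (mod 2), either max{d(v₀), d(v₁)} > (k−1)/2 or d(v₀) = d(v₁) = (k−1)/2. -/
open SimpleGraph

/-- The degree of a vertex, as the cardinality of its neighbor set. -/
noncomputable def deg {V : Type} (G : SimpleGraph V) (v : V) : ℕ := (G.neighborSet v).ncard

/-- `H` is a minor of `G`, via branch sets. -/
def IsMinor {W V : Type} (H : SimpleGraph W) (G : SimpleGraph V) : Prop :=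
  ∃ B : W → Set V,
    (∀ w, (B w).Nonempty) ∧
    (∀ w, (G.induce (B w)).Connected) ∧
    (Pairwise fun w₁ w₂ => Disjoint (B w₁) (B w₂)) ∧
    (∀ w₁ w₂, H.Adj w₁ w₂ → ∃ v₁ ∈ B w₁, ∃ v₂ ∈ B w₂, G.Adj v₁ v₂)

/-- A graph is planar iff it has no `K₅` and no `K₃,₃` minor (Wagner's theorem). -/
def IsPlanar {V : Type} (G : SimpleGraph V) : Prop :=
  ¬ IsMinor (completeGraph (Fin 5)) G ∧
  ¬ IsMinor (completeBipartiteGraph (Fin 3) (Fin 3)) G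

/-- `G` has thickness at most `t`: its edge set partitions into `t` planar subgraphs. -/
def ThicknessLE {V : Type} (G : SimpleGraph V) (t : ℕ) : Prop :=
  ∃ c : Sym2 V → Fin t, ∀ i : Fin t,
    IsPlanar (SimpleGraph.fromEdgeSet {e | e ∈ G.edgeSet ∧ c e = i})

/-- The thickness of a graph. -/
noncomputable def thickness {V : Type} (G : SimpleGraph V) : ℕ :=
  sInf {t | ThicknessLE G t}

/-- `φ` is an odd coloring of `G` with `k` colors. -/
def IsOddColoring {V : Type} (G : SimpleGraph V) {k : ℕ} (φ : V → Fin k) : Prop :=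
  (∀ ⦃u v⦄, G.Adj u v → φ u ≠ φ v) ∧
  ∀ v : V, (G.neighborSet v).Nonempty →
    ∃ c : Fin k, Odd ({u | u ∈ G.neighborSet v ∧ φ u = c}.ncard)

/-- The odd chromatic number of `G`. -/
noncomputable def oddChrom {V : Type} (G : SimpleGraph V) : ℕ :=
  sInf {k | ∃ φ : V → Fin k, IsOddColoring G φ}

/-- `G` is odd `k⁺`-critical. -/
def OddCritical {V : Type} (G : SimpleGraph V) (k : ℕ) : Prop :=
  k ≤ oddChrom G ∧ ∀ H : G.Subgraph, H ≠ ⊤ → oddChrom H.coe < k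

/-- A vertex is `n`-easy if its degree is odd or it has a neighbor of degree `2i`, `1 ≤ i ≤ n`. -/
def NEasy {V : Type} (G : SimpleGraph V) (n : ℕ) (v : V) : Prop :=
  Odd (deg G v) ∨ ∃ u ∈ G.neighborSet v, ∃ i, 1 ≤ i ∧ i ≤ n ∧ deg G u = 2 * i

/-!
Delete the edge `v₀v₁` and take an odd `(k-1)`-colouring `φ` of `G - v₀v₁`; it is proper on `G`
except possibly at `v₀v₁`, and odd at every vertex other than `v₀, v₁`. If a neighbour `x` of `w`
is recoloured, all colour classes at `w` become even for at most one new colour of `x`. So `x` can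
be recoloured keeping every neighbour odd and avoiding the colours on a set `S` of its neighbours
as soon as `#S + d(x) < k - 1`. If `2 d(v₁) ≤ k - 1`, recolour `v₁` avoiding the colours of
`N(v₁) - v₀`: now `v₀` sees an odd class too. If moreover `2 d(v₀) < k - 1`, recolour `v₀` avoiding
the colours of `N(v₀)`: this gives an odd `(k-1)`-colouring of `G`, which is impossible. Hence
`k ≤ 2 d(v₀) + 1` or `k ≤ 2 d(v₁)`, and combining both orientations of the edge gives the claim.
-/

open Finset Function

variable {V : Type} {m : ℕ}

def OddAt (G : SimpleGraph V) (φ : V → Fin m) (w : V) : Prop :=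
  (G.neighborSet w).Nonempty → ∃ c, Odd {u | u ∈ G.neighborSet w ∧ φ u = c}.ncard

variable {G : SimpleGraph V} {φ : V → Fin m} {w : V}

theorem isOddColoring_iff_oddAt :
    IsOddColoring G φ ↔ (∀ ⦃u v⦄, G.Adj u v → φ u ≠ φ v) ∧ ∀ w, OddAt G φ w :=
  Iff.rfl

theorem oddAt_deleteEdges_iff {v₀ v₁ : V} (h₀ : w ≠ v₀) (h₁ : w ≠ v₁) :
    OddAt (G.deleteEdges {s(v₀, v₁)}) φ w ↔ OddAt G φ w := by
  have hnbr : (G.deleteEdges {s(v₀, v₁)}).neighborSet w = G.neighborSet w := by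
    ext u
    simp [h₀, h₁]
  simp only [OddAt, hnbr]

section Recolouring

variable [DecidableEq V] {x : V} {b : Fin m}

theorem oddAt_update_of_not_adj (hx : ¬G.Adj w x) :
    OddAt G (update φ x b) w ↔ OddAt G φ w := by
  have hset (c : Fin m) : {u | u ∈ G.neighborSet w ∧ update φ x b u = c} =
      {u | u ∈ G.neighborSet w ∧ φ u = c} := by
    ext u
    simp only [Set.mem_ofPred_eq, SimpleGraph.mem_neighborSet, and_congr_right_iff]
    intro hu
    rw [update_of_ne (by rintro rfl; exact hx hu)]
  simp only [OddAt, hset]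

theorem ncard_update_add [Finite V] (hx : G.Adj w x) (b c : Fin m) :
    {u | u ∈ G.neighborSet w ∧ update φ x b u = c}.ncard + (if φ x = c then 1 else 0) =
      {u | u ∈ G.neighborSet w ∧ φ u = c}.ncard + (if b = c then 1 else 0) := by
  classical
  have : Fintype V := Fintype.ofFinite V
  have hmem : x ∈ G.neighborFinset w := by simpa using hx
  have hcount (ψ : V → Fin m) : {u | u ∈ G.neighborSet w ∧ ψ u = c}.ncard =
      (if ψ x = c then 1 else 0) + ∑ u ∈ (G.neighborFinset w).erase x, if ψ u = c then 1 else 0 := by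
    have hset : {u | u ∈ G.neighborSet w ∧ ψ u = c} = ↑{u ∈ G.neighborFinset w | ψ u = c} := by
      ext; simp
    rw [hset, Set.ncard_coe_finset, card_filter, ← add_sum_erase _ _ hmem]
  rw [hcount, hcount, update_self,
    sum_congr rfl fun u hu => by rw [update_of_ne (ne_of_mem_erase hu)]]
  omega

theorem exists_forall_ne_oddAt_update [Finite V] (hx : G.Adj w x) (φ : V → Fin m) :
    ∃ β, ∀ b, b ≠ β → OddAt G (update φ x b) w := by
  by_cases hblocked : ∀ b, OddAt G (update φ x b) w
  · exact ⟨φ x, fun b _ => hblocked b⟩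
  obtain ⟨β, hβ⟩ := not_forall.1 hblocked
  refine ⟨β, fun b hbβ => by_contra fun hb => ?_⟩
  simp only [OddAt, Classical.not_imp, not_exists, Nat.not_odd_iff_even] at hβ hb
  -- recolouring `x` from `β` to `b` changes the parity of the class of `b`
  have hflip := ncard_update_add (φ := update φ x β) hx b b
  rw [update_idem, update_self, if_neg hbβ.symm, if_pos rfl, add_zero] at hflip
  exact Nat.even_add_one.1 (hflip ▸ hb.2 b) (hβ.2 b)

theorem exists_forall_adj_oddAt_update [Fintype V] [DecidableRel G.Adj] (φ : V → Fin m)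
    (x : V) (S : Finset V) (h : #S + G.degree x < m) :
    ∃ b, (∀ u ∈ S, φ u ≠ b) ∧ ∀ w, G.Adj w x → OddAt G (update φ x b) w := by
  have : Nonempty (Fin m) := ⟨φ x⟩
  choose! β hβ using fun w (hw : G.Adj w x) => exists_forall_ne_oddAt_update hw φ
  have hcard : #(S.image φ ∪ (G.neighborFinset x).image β) < #(univ : Finset (Fin m)) :=
    calc _ ≤ #S + G.degree x :=
          (card_union_le _ _).trans (add_le_add card_image_le card_image_le)
      _ < _ := by rwa [card_univ, Fintype.card_fin]
  obtain ⟨b, -, hb⟩ := exists_mem_notMem_of_card_lt_card hcard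
  simp only [mem_union, mem_image, mem_neighborFinset, not_or, not_exists, not_and] at hb
  exact ⟨b, hb.1, fun w hw => hβ w hw b fun h => hb.2 w hw.symm h.symm⟩

theorem update_ne_update_of_adj {G' : SimpleGraph V}
    (hprop : ∀ ⦃u v⦄, G'.Adj u v → u ≠ x → v ≠ x → φ u ≠ φ v)
    (hfresh : ∀ u, G'.Adj x u → φ u ≠ b) :
    ∀ ⦃u v⦄, G'.Adj u v → update φ x b u ≠ update φ x b v := by
  intro u v huv
  rcases eq_or_ne u x with rfl | hu
  · rw [update_self, update_of_ne (G'.ne_of_adj huv).symm]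
    exact (hfresh v huv).symm
  rcases eq_or_ne v x with rfl | hv
  · rw [update_self, update_of_ne hu]
    exact hfresh u huv.symm
  rw [update_of_ne hu, update_of_ne hv]
  exact hprop huv hu hv

end Recolouring

section Edge

variable [Fintype V] [DecidableEq V] [DecidableRel G.Adj] {v₀ v₁ : V}

theorem exists_isOddColoring_of_forall_ne_oddAt (hadj : G.Adj v₀ v₁)
    (hprop : ∀ ⦃u v⦄, (G.deleteEdges {s(v₀, v₁)}).Adj u v → φ u ≠ φ v)
    (hodd : ∀ w, w ≠ v₁ → OddAt G φ w) (h : 2 * G.degree v₀ < m) :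
    ∃ ψ : V → Fin m, IsOddColoring G ψ := by
  obtain ⟨b, hfresh, hnbr⟩ := exists_forall_adj_oddAt_update (G := G) φ v₀ (G.neighborFinset v₀)
    (by rwa [card_neighborFinset_eq_degree, ← two_mul])
  refine ⟨update φ v₀ b, isOddColoring_iff_oddAt.2
    ⟨update_ne_update_of_adj (fun u v huv hu hv => hprop ?_) (fun u hu => hfresh u ?_), fun w => ?_⟩⟩
  · simp [huv, hu, hv]
  · simpa using hu
  by_cases hw : G.Adj w v₀
  · exact hnbr w hw
  · exact (oddAt_update_of_not_adj hw).2 (hodd w (by rintro rfl; exact hw hadj.symm))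

theorem exists_forall_ne_oddAt_update_endpoint (hadj : G.Adj v₀ v₁)
    (hprop : ∀ ⦃u v⦄, (G.deleteEdges {s(v₀, v₁)}).Adj u v → φ u ≠ φ v)
    (hodd : ∀ w, w ≠ v₀ → w ≠ v₁ → OddAt G φ w) (h : 2 * G.degree v₁ ≤ m) :
    ∃ ψ : V → Fin m, (∀ ⦃u v⦄, (G.deleteEdges {s(v₀, v₁)}).Adj u v → ψ u ≠ ψ v) ∧
      ∀ w, w ≠ v₁ → OddAt G ψ w := by
  have hv₀ : v₀ ∈ G.neighborFinset v₁ := by simpa using hadj.symm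
  have hd : 0 < G.degree v₁ := G.degree_pos_iff_exists_adj v₁ |>.2 ⟨v₀, hadj.symm⟩
  obtain ⟨b, hfresh, hnbr⟩ :=
    exists_forall_adj_oddAt_update (G := G) φ v₁ ((G.neighborFinset v₁).erase v₀)
      (by rw [card_erase_of_mem hv₀, G.card_neighborFinset_eq_degree]; omega)
  refine ⟨update φ v₁ b, update_ne_update_of_adj (fun u v huv _ _ => hprop huv)
    (fun u hu => hfresh u ?_), fun w hw => ?_⟩
  · rw [deleteEdges_adj] at hu
    exact mem_erase.2 ⟨by rintro rfl; exact hu.2 Sym2.eq_swap, by simpa using hu.1⟩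
  by_cases hw' : G.Adj w v₁
  · exact hnbr w hw'
  · exact (oddAt_update_of_not_adj hw').2 (hodd w (by rintro rfl; exact hw' hadj) hw)

theorem exists_isOddColoring_of_isOddColoring_deleteEdges (hadj : G.Adj v₀ v₁)
    (hφ : IsOddColoring (G.deleteEdges {s(v₀, v₁)}) φ) (h₀ : 2 * G.degree v₀ < m)
    (h₁ : 2 * G.degree v₁ ≤ m) : ∃ ψ : V → Fin m, IsOddColoring G ψ := by
  obtain ⟨hprop, hodd⟩ := isOddColoring_iff_oddAt.1 hφ
  obtain ⟨χ, hχprop, hχodd⟩ := exists_forall_ne_oddAt_update_endpoint hadj hprop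
    (fun w hw₀ hw₁ => (oddAt_deleteEdges_iff hw₀ hw₁).1 (hodd w)) h₁
  exact exists_isOddColoring_of_forall_ne_oddAt hadj hχprop hχodd h₀

end Edge

theorem oddChrom_le_of_isOddColoring (hφ : IsOddColoring G φ) : oddChrom G ≤ m :=
  Nat.sInf_le ⟨φ, hφ⟩

theorem isOddColoring_of_injective (hφ : Injective φ) : IsOddColoring G φ := by
  refine isOddColoring_iff_oddAt.2
    ⟨fun u v huv => hφ.ne (G.ne_of_adj huv), fun w ⟨u, hu⟩ => ⟨φ u, ?_⟩⟩
  have hsingle : {v | v ∈ G.neighborSet w ∧ φ v = φ u} = {u} := by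
    ext v
    simp only [Set.mem_ofPred_eq, hφ.eq_iff, Set.mem_singleton_iff, and_iff_right_iff_imp]
    rintro rfl
    exact hu
  rw [hsingle, Set.ncard_singleton]
  exact odd_one

theorem IsOddColoring.comp_injective {n : ℕ} {f : Fin m → Fin n} (hf : Injective f)
    (hφ : IsOddColoring G φ) : IsOddColoring G (f ∘ φ) := by
  refine isOddColoring_iff_oddAt.2 ⟨fun u v huv => hf.ne (hφ.1 huv), fun w hw => ?_⟩
  obtain ⟨c, hc⟩ := hφ.2 w hw
  exact ⟨f c, by simpa [hf.eq_iff] using hc⟩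

theorem IsOddColoring.comp_iso {W : Type} {G' : SimpleGraph W} {φ : W → Fin m} (e : G ≃g G')
    (hφ : IsOddColoring G' φ) : IsOddColoring G (φ ∘ e) := by
  refine isOddColoring_iff_oddAt.2
    ⟨fun u v huv => hφ.1 (e.map_adj_iff.2 huv), fun w ⟨u, hu⟩ => ?_⟩
  obtain ⟨c, hc⟩ := hφ.2 (e w) ⟨e u, e.map_adj_iff.2 hu⟩
  refine ⟨c, ?_⟩
  have hpre : {v | v ∈ G.neighborSet w ∧ (φ ∘ e) v = c} =
      e ⁻¹' {v | v ∈ G'.neighborSet (e w) ∧ φ v = c} := by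
    ext
    simp [Iso.map_adj_iff]
  rwa [hpre, Set.ncard_preimage_of_injective_subset_range e.injective (by simp)]

theorem exists_isOddColoring_of_oddChrom_le [Finite V] (h : oddChrom G ≤ m) :
    ∃ φ : V → Fin m, IsOddColoring G φ := by
  have hne : {n | ∃ φ : V → Fin n, IsOddColoring G φ}.Nonempty :=
    ⟨Nat.card V, Finite.equivFin V, isOddColoring_of_injective (Finite.equivFin V).injective⟩
  obtain ⟨φ, hφ⟩ := Nat.sInf_mem hne
  exact ⟨_, hφ.comp_injective (Fin.castLE_injective h)⟩

theorem OddCritical.exists_isOddColoring_deleteEdges [Finite V] {k : ℕ} (hG : OddCritical G k)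
    {v₀ v₁ : V} (hadj : G.Adj v₀ v₁) :
    ∃ φ : V → Fin (k - 1), IsOddColoring (G.deleteEdges {s(v₀, v₁)}) φ := by
  let H := (⊤ : G.Subgraph).deleteEdges {s(v₀, v₁)}
  have hH : H ≠ ⊤ := fun h => by
    have : H.Adj v₀ v₁ := h ▸ hadj
    simp [H] at this
  obtain ⟨φ, hφ⟩ := exists_isOddColoring_of_oddChrom_le (Nat.le_sub_one_of_lt (hG.2 H hH))
  have hspan : H.spanningCoe = G.deleteEdges {s(v₀, v₁)} := by
    rw [← Subgraph.deleteEdges_spanningCoe_eq, Subgraph.spanningCoe_top]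
  refine ⟨φ ∘ H.spanningCoeEquivCoeOfSpanning fun _ => trivial, ?_⟩
  rw [← hspan]
  exact hφ.comp_iso _

theorem OddCritical.le_two_mul_degree_add_one_or_le_two_mul_degree [Fintype V]
    [DecidableRel G.Adj] {k : ℕ} (hG : OddCritical G k) {v₀ v₁ : V} (hadj : G.Adj v₀ v₁) :
    k ≤ 2 * G.degree v₀ + 1 ∨ k ≤ 2 * G.degree v₁ := by
  classical
  by_contra! h
  obtain ⟨φ, hφ⟩ := hG.exists_isOddColoring_deleteEdges hadj
  obtain ⟨ψ, hψ⟩ :=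
    exists_isOddColoring_of_isOddColoring_deleteEdges hadj hφ (by omega) (by omega)
  have := hG.1.trans (oddChrom_le_of_isOddColoring hψ)
  omega

theorem deg_eq_degree [Fintype V] [DecidableRel G.Adj] (v : V) : deg G v = G.degree v := by
  rw [deg, ← card_neighborFinset_eq_degree, neighborFinset, Set.ncard_eq_toFinset_card']

theorem oddCritical_edge_degree_condition_general {V : Type} [Fintype V] (G : SimpleGraph V)
    (k : ℕ) (hG : OddCritical G k) :
    ∀ v₀ v₁ : V, G.Adj v₀ v₁ → deg G v₀ % 2 = deg G v₁ % 2 →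
      ((k : ℚ) - 1) / 2 < (max (deg G v₀) (deg G v₁) : ℚ) ∨
      ((deg G v₀ : ℚ) = ((k : ℚ) - 1) / 2 ∧ (deg G v₁ : ℚ) = ((k : ℚ) - 1) / 2) := by
  classical
  intro v₀ v₁ hadj _
  have h₀₁ := hG.le_two_mul_degree_add_one_or_le_two_mul_degree hadj
  have h₁₀ := hG.le_two_mul_degree_add_one_or_le_two_mul_degree hadj.symm
  rw [deg_eq_degree, deg_eq_degree]
  rcases lt_or_ge (2 * max (G.degree v₀) (G.degree v₁)) k with h | h
  · have e₀ : (k : ℚ) = 2 * G.degree v₀ + 1 := by exact_mod_cast (by omega : k = _)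
    have e₁ : (k : ℚ) = 2 * G.degree v₁ + 1 := by exact_mod_cast (by omega : k = _)
    right
    constructor <;> linarith
  · have : (k : ℚ) ≤ 2 * max (G.degree v₀ : ℚ) (G.degree v₁) := by exact_mod_cast h
    left
    linarith

/-- In an odd `k⁺`-critical graph (`k ≥ 4`), for every edge `v₀v₁` with `d(v₀) ≡ d(v₁) (mod 2)`,
either `max{d(v₀),d(v₁)} > (k−1)/2` or `d(v₀) = d(v₁) = (k−1)/2`. -/
theorem oddCritical_edge_degree_condition {V : Type} [Fintype V] (G : SimpleGraph V)
    (k : ℕ) (hk : 4 ≤ k) (hG : OddCritical G k) :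
    ∀ v₀ v₁ : V, G.Adj v₀ v₁ → deg G v₀ % 2 = deg G v₁ % 2 →
      ((k : ℚ) - 1) / 2 < (max (deg G v₀) (deg G v₁) : ℚ) ∨
      ((deg G v₀ : ℚ) = ((k : ℚ) - 1) / 2 ∧ (deg G v₁ : ℚ) = ((k : ℚ) - 1) / 2) :=
  oddCritical_edge_degree_condition_general G k hG
end

section
/- There is no constant C such that every biplanar graph G satisfies χ_o(G) ≤ C; i.e., the odd chromatic number is unbounded on the class of graphs of thickness at most 2. -/
open SimpleGraph

/-!
The witnesses are the 1-subdivisions of complete graphs. Ordering the two ends of each edge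
arbitrarily splits every subdivided edge into a first and a second half; the first halves form a
star forest, and so do the second halves. Star forests are closed under taking minors, so they
contain neither `K₅` nor `K₃,₃` as a minor: the subdivision has thickness at most 2. In an odd
colouring of the subdivision the middle vertex of a subdivided edge `uv` has exactly the two
neighbours `u` and `v`, so they must get different colours; restricted to the branch vertices the
colouring is therefore a proper colouring of `Kₙ` and uses at least `n` colours.
-/

variable {V W : Type}

theorem IsMinor.of_le {H : SimpleGraph W} {G G' : SimpleGraph V} (hM : IsMinor H G) (hle : G ≤ G') :
    IsMinor H G' := by
  obtain ⟨B, hne, hconn, hdisj, hadj⟩ := hM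
  refine ⟨B, hne, fun w => (hconn w).mono fun _ _ h => hle h, hdisj, fun w₁ w₂ h => ?_⟩
  obtain ⟨v₁, hv₁, v₂, hv₂, hv⟩ := hadj w₁ w₂ h
  exact ⟨v₁, hv₁, v₂, hv₂, hle hv⟩

theorem IsPlanar.anti {G G' : SimpleGraph V} (hle : G ≤ G') (h : IsPlanar G') : IsPlanar G :=
  ⟨fun hM => h.1 (hM.of_le hle), fun hM => h.2 (hM.of_le hle)⟩

theorem thicknessLE_two_of_le_sup {G G₁ G₂ : SimpleGraph V} (hG : G ≤ G₁ ⊔ G₂) (h₁ : IsPlanar G₁)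
    (h₂ : IsPlanar G₂) : ThicknessLE G 2 := by
  classical
  refine ⟨fun e => if e ∈ G₁.edgeSet then 0 else 1, fun i => ?_⟩
  fin_cases i
  · refine h₁.anti fun u v huv => ?_
    simp only [fromEdgeSet_adj, Set.mem_ofPred_eq] at huv
    obtain ⟨⟨-, hc⟩, -⟩ := huv
    simpa using hc
  · refine h₂.anti fun u v huv => ?_
    simp only [fromEdgeSet_adj, Set.mem_ofPred_eq] at huv
    obtain ⟨⟨huv, hc⟩, -⟩ := huv
    exact (hG huv).resolve_left (by simpa using hc)

def IsStarForest (G : SimpleGraph V) : Prop :=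
  ∀ ⦃u v⦄, G.Adj u v → (∀ w, G.Adj v w → w = u) ∨ (∀ w, G.Adj u w → w = v)

theorem minor_adj_eq_of_leaf {H : SimpleGraph W} {G : SimpleGraph V} {B : W → Set V}
    (hconn : ∀ w, (G.induce (B w)).Connected) (hdisj : Pairwise fun w₁ w₂ => Disjoint (B w₁) (B w₂))
    (hadj : ∀ w₁ w₂, H.Adj w₁ w₂ → ∃ v₁ ∈ B w₁, ∃ v₂ ∈ B w₂, G.Adj v₁ v₂)
    {w w' : W} (hww' : w ≠ w') {x y : V} (hx : x ∈ B w) (hy : y ∈ B w')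
    (hleaf : ∀ z, G.Adj y z → z = x) : ∀ w'', H.Adj w' w'' → w'' = w := by
  have hsingle : ∀ z ∈ B w', z = y := by
    intro z hz
    by_contra hzy
    have : Nontrivial (B w') := nontrivial_of_ne ⟨y, hy⟩ ⟨z, hz⟩ (by simpa [eq_comm] using hzy)
    obtain ⟨t, ht⟩ := (hconn w').preconnected.exists_adj_of_nontrivial ⟨y, hy⟩
    have htx : (t : V) = x := hleaf t (by simpa using ht)
    exact Set.disjoint_left.1 (hdisj hww') hx (htx ▸ t.2)
  intro w'' hw''
  obtain ⟨a, ha, b, hb, hab⟩ := hadj w' w'' hw''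
  have hbx : b = x := hleaf b (hsingle a ha ▸ hab)
  by_contra hne
  exact Set.disjoint_left.1 (hdisj hne) (hbx ▸ hb) hx

theorem IsMinor.isStarForest {H : SimpleGraph W} {G : SimpleGraph V} (hM : IsMinor H G)
    (hG : IsStarForest G) : IsStarForest H := by
  obtain ⟨B, -, hconn, hdisj, hadj⟩ := hM
  intro w w' hww'
  obtain ⟨x, hx, y, hy, hxy⟩ := hadj w w' hww'
  rcases hG hxy with hy_leaf | hx_leaf
  · exact .inl (minor_adj_eq_of_leaf hconn hdisj hadj hww'.ne hx hy hy_leaf)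
  · exact .inr (minor_adj_eq_of_leaf hconn hdisj hadj hww'.ne.symm hy hx hx_leaf)

theorem IsStarForest.isPlanar {G : SimpleGraph V} (hG : IsStarForest G) : IsPlanar G := by
  constructor
  · intro hM
    rcases hM.isStarForest hG (u := 0) (v := 1) (by decide) with h | h
    · exact absurd (h 2 (by decide)) (by decide)
    · exact absurd (h 2 (by decide)) (by decide)
  · intro hM
    rcases hM.isStarForest hG (u := .inl 0) (v := .inr 0) (by simp) with h | h
    · exact absurd (h (.inl 1) (by simp)) (by simp)
    · exact absurd (h (.inr 1) (by simp)) (by simp)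

namespace SimpleGraph

def ofBipartiteRel (r : V → W → Prop) : SimpleGraph (V ⊕ W) where
  Adj
    | .inl a, .inr b => r a b
    | .inr b, .inl a => r a b
    | _, _ => False
  symm := ⟨by rintro (_ | _) (_ | _) h <;> exact h⟩
  loopless := ⟨by rintro (_ | _) h <;> exact h⟩

@[simp]
theorem ofBipartiteRel_adj_inl_inr (r : V → W → Prop) (a : V) (b : W) :
    (ofBipartiteRel r).Adj (.inl a) (.inr b) ↔ r a b := Iff.rfl

@[simp]
theorem ofBipartiteRel_adj_inr_inl (r : V → W → Prop) (a : V) (b : W) :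
    (ofBipartiteRel r).Adj (.inr b) (.inl a) ↔ r a b := Iff.rfl

@[simp]
theorem ofBipartiteRel_adj_inl_inl (r : V → W → Prop) (a a' : V) :
    ¬ (ofBipartiteRel r).Adj (.inl a) (.inl a') := id

@[simp]
theorem ofBipartiteRel_adj_inr_inr (r : V → W → Prop) (b b' : W) :
    ¬ (ofBipartiteRel r).Adj (.inr b) (.inr b') := id

theorem ofBipartiteRel_le_sup {r r₁ r₂ : V → W → Prop} (h : ∀ a b, r a b → r₁ a b ∨ r₂ a b) :
    ofBipartiteRel r ≤ ofBipartiteRel r₁ ⊔ ofBipartiteRel r₂ := by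
  rintro (a | b) (a' | b') hadj <;> simp_all

theorem isStarForest_ofBipartiteRel {r : V → W → Prop} (h : ∀ a a' b, r a b → r a' b → a = a') :
    IsStarForest (ofBipartiteRel r) := by
  rintro (a | b) (a' | b') hadj
  · simp at hadj
  · refine .inl ?_
    rintro (c | c) hc
    · exact congrArg Sum.inl (h c a b' hc hadj)
    · simp at hc
  · refine .inr ?_
    rintro (c | c) hc
    · exact congrArg Sum.inl (h c a' b hc hadj)
    · simp at hc
  · simp at hadj

def subdivision (G : SimpleGraph V) : SimpleGraph (V ⊕ G.edgeSet) :=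
  ofBipartiteRel fun v e => v ∈ (e : Sym2 V)

theorem neighborSet_subdivision_inr (G : SimpleGraph V) {u v : V} (h : G.Adj u v) :
    G.subdivision.neighborSet (.inr ⟨s(u, v), h⟩) = {.inl u, .inl v} := by
  ext (w | e) <;> simp [subdivision]

theorem thicknessLE_two_subdivision (G : SimpleGraph V) : ThicknessLE G.subdivision 2 := by
  have hhalf : ∀ f : G.edgeSet → V, IsPlanar (ofBipartiteRel fun v e => v = f e) :=
    fun f => (isStarForest_ofBipartiteRel fun a a' b ha ha' => ha.trans ha'.symm).isPlanar
  refine thicknessLE_two_of_le_sup (ofBipartiteRel_le_sup fun v e hv => ?_)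
    (hhalf fun e => (Quot.out (e : Sym2 V)).1) (hhalf fun e => (Quot.out (e : Sym2 V)).2)
  rwa [← Sym2.mem_iff, Sym2.mk, Prod.mk.eta, Quot.out_eq]

end SimpleGraph

theorem isOddColoring_of_injective_s13 (G : SimpleGraph V) {k : ℕ} {φ : V → Fin k}
    (hφ : Function.Injective φ) : IsOddColoring G φ := by
  refine ⟨fun u v huv h => huv.ne (hφ h), ?_⟩
  rintro v ⟨u, hu⟩
  refine ⟨φ u, ?_⟩
  have hclass : {u' | u' ∈ G.neighborSet v ∧ φ u' = φ u} = {u} :=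
    Set.ext fun u' => ⟨fun h => hφ h.2, by rintro rfl; exact ⟨hu, rfl⟩⟩
  rw [hclass, Set.ncard_singleton]
  exact odd_one

theorem exists_isOddColoring_oddChrom [Finite V] (G : SimpleGraph V) :
    ∃ φ : V → Fin (oddChrom G), IsOddColoring G φ := by
  obtain ⟨n, ⟨e⟩⟩ := Finite.exists_equiv_fin V
  have hne : {k | ∃ φ : V → Fin k, IsOddColoring G φ}.Nonempty :=
    ⟨n, e, isOddColoring_of_injective_s13 G e.injective⟩
  exact Nat.sInf_mem hne

theorem not_odd_ncard_pair_color {k : ℕ} {φ : V → Fin k} {a b : V} (hab : a ≠ b) (hφ : φ a = φ b)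
    (c : Fin k) : ¬ Odd {u | u ∈ ({a, b} : Set V) ∧ φ u = c}.ncard := by
  by_cases hc : φ a = c
  · have hclass : {u | u ∈ ({a, b} : Set V) ∧ φ u = c} = {a, b} := by
      ext u
      simp only [Set.mem_ofPred_eq, Set.mem_insert_iff, Set.mem_singleton_iff, and_iff_left_iff_imp]
      rintro (rfl | rfl) <;> simp [← hφ, hc]
    rw [hclass, Set.ncard_pair hab]
    decide
  · have hclass : {u | u ∈ ({a, b} : Set V) ∧ φ u = c} = ∅ := by
      ext u
      simp only [Set.mem_ofPred_eq, Set.mem_insert_iff, Set.mem_singleton_iff,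
        Set.mem_empty_iff_false, iff_false, not_and]
      rintro (rfl | rfl) <;> simp [← hφ, hc]
    rw [hclass, Set.ncard_empty]
    decide

def IsOddColoring.coloringOfSubdivision {G : SimpleGraph V} {k : ℕ} {φ : V ⊕ G.edgeSet → Fin k}
    (hφ : IsOddColoring G.subdivision φ) : G.Coloring (Fin k) :=
  Coloring.mk (fun v => φ (.inl v)) fun {u v} huv hφuv => by
    obtain ⟨c, hc⟩ := hφ.2 (.inr ⟨s(u, v), huv⟩) ⟨.inl u, by simp [subdivision]⟩
    rw [neighborSet_subdivision_inr G huv] at hc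
    exact not_odd_ncard_pair_color (by simpa using huv.ne) hφuv c hc

theorem chromaticNumber_le_oddChrom_subdivision [Finite V] (G : SimpleGraph V) :
    G.chromaticNumber ≤ oddChrom G.subdivision := by
  obtain ⟨φ, hφ⟩ := exists_isOddColoring_oddChrom G.subdivision
  exact Colorable.chromaticNumber_le ⟨hφ.coloringOfSubdivision⟩

/-- The odd chromatic number is unbounded on the class of graphs of thickness at most 2. -/
theorem oddChrom_unbounded_on_biplanar :
    ∀ C : ℕ, ∃ (V : Type) (_ : Fintype V) (G : SimpleGraph V),
      thickness G ≤ 2 ∧ C < oddChrom G := by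
  intro C
  let K : SimpleGraph (Fin (C + 1)) := ⊤
  refine ⟨_, Fintype.ofFinite _, K.subdivision, Nat.sInf_le K.thicknessLE_two_subdivision, ?_⟩
  have h := chromaticNumber_le_oddChrom_subdivision K
  rw [chromaticNumber_top, Fintype.card_fin] at h
  exact Nat.lt_of_succ_le (by exact_mod_cast h)
end
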